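/- arXiv:2303.13860 — 5 statements merged into one kernel-verified Lean document; each statement's English description precedes it below -/
import Mathlib

section
/- Let L ≥ K ≥ 1 be integers, let 0 ≤ m ≤ L - K, and let L̄ = L - (K-1)/2 (as a rational number). Then ((L̄-m)² - ((K-1)/2)²)^{K/2} / (L̄² - ((K-1)/2)²)^{K/2} ≤ C(L-m,K)/C(L,K) ≤ ((L̄-m)/L̄)^K. -/
open Real

set_option maxHeartbeats 1000000 in
theorem stmt_3 (L K m : ℕ) (hK : 1 ≤ K) (hKL : K ≤ L) (hm : m ≤ L - K)
    (Lbar c : ℝ) (hLbar : Lbar = (L : ℝ) - ((K : ℝ) - 1) / 2)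
    (hc : c = ((K : ℝ) - 1) / 2) :
    (((Lbar - m) ^ 2 - c ^ 2) / (Lbar ^ 2 - c ^ 2)) ^ ((K : ℝ) / 2)
        ≤ (Nat.choose (L - m) K : ℝ) / (Nat.choose L K : ℝ) ∧
      (Nat.choose (L - m) K : ℝ) / (Nat.choose L K : ℝ)
        ≤ ((Lbar - m) / Lbar) ^ K := by
  have hmKL : m + K ≤ L := by omega
  set n := L - m with hn
  have hKn : K ≤ n := by omega
  have hnR : (n : ℝ) = (L : ℝ) - (m : ℝ) := by
    have h : n + m = L := by omega
    have := congrArg (Nat.cast : ℕ → ℝ) h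
    push_cast at this; linarith
  have hKR : (1 : ℝ) ≤ (K : ℝ) := by exact_mod_cast hK
  have hmR : (0 : ℝ) ≤ (m : ℝ) := Nat.cast_nonneg m
  have hLKm : (m : ℝ) + (K : ℝ) ≤ (L : ℝ) := by exact_mod_cast hmKL
  -- basic positivity
  have hcnn : 0 ≤ c := by rw [hc]; linarith
  have hLbarc : c + 1 ≤ Lbar - m := by rw [hLbar, hc]; linarith
  have hLbarpos : 0 < Lbar := by linarith
  have hLbarm : 0 < Lbar - m := by linarith
  have hden2 : 0 < Lbar ^ 2 - c ^ 2 := by nlinarith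
  set r : ℝ := ((Lbar - m) ^ 2 - c ^ 2) / (Lbar ^ 2 - c ^ 2) with hrdef
  have hnum2 : 0 ≤ (Lbar - m) ^ 2 - c ^ 2 := by nlinarith
  have hr0 : 0 ≤ r := div_nonneg hnum2 (le_of_lt hden2)
  set t : ℝ := (Lbar - m) / Lbar with htdef
  have ht0 : 0 ≤ t := div_nonneg (le_of_lt hLbarm) (le_of_lt hLbarpos)
  -- the ratio as a product
  set f : ℕ → ℝ := fun i => ((n : ℝ) - i) / ((L : ℝ) - i) with hf
  have hdesc : ∀ N : ℕ, K ≤ N →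
      ((N.descFactorial K : ℕ) : ℝ) = ∏ i ∈ Finset.range K, ((N : ℝ) - i) := by
    intro N hN
    rw [Nat.descFactorial_eq_prod_range, Nat.cast_prod]
    exact Finset.prod_congr rfl fun i hi => by
      rw [Nat.cast_sub (by simp at hi; omega)]
  have hchoose : ∀ N : ℕ, (N.choose K : ℝ) = ((N.descFactorial K : ℕ) : ℝ) / (Nat.factorial K : ℝ) := by
    intro N
    rw [Nat.descFactorial_eq_factorial_mul_choose]
    push_cast
    field_simp
  have hRprod : (Nat.choose n K : ℝ) / (Nat.choose L K : ℝ) = ∏ i ∈ Finset.range K, f i := by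
    have hfne : (Nat.factorial K : ℝ) ≠ 0 := by positivity
    rw [hchoose n, hchoose L, div_div_div_comm, div_self hfne, div_one,
      hdesc n hKn, hdesc L hKL, ← Finset.prod_div_distrib]
  set R : ℝ := (Nat.choose n K : ℝ) / (Nat.choose L K : ℝ) with hRdef
  have hRnn : 0 ≤ R := by positivity
  -- pair estimates
  have hpair : ∀ i ∈ Finset.range K,
      r ≤ f i * f (K - 1 - i) ∧ f i * f (K - 1 - i) ≤ t ^ 2 := by
    intro i hi
    simp only [Finset.mem_range] at hi
    have hy : ((K - 1 - i : ℕ) : ℝ) = (K : ℝ) - 1 - (i : ℝ) := by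
      have h : K - 1 - i + (i + 1) = K := by omega
      have := congrArg (Nat.cast : ℕ → ℝ) h
      push_cast at this; linarith
    have hxK : (i : ℝ) ≤ (K : ℝ) - 1 := by
      have : i + 1 ≤ K := hi
      have := (Nat.cast_le (α := ℝ)).2 this
      push_cast at this; linarith
    have hx0 : (0 : ℝ) ≤ (i : ℝ) := Nat.cast_nonneg i
    set a : ℝ := (L : ℝ) - i with ha
    set b : ℝ := (L : ℝ) - ((K : ℝ) - 1 - i) with hb
    have hab : a + b = 2 * Lbar := by rw [ha, hb, hLbar]; ring
    have hb' : b = 2 * Lbar - a := by rw [ha, hb, hLbar]; ring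
    have hapos : 0 < a := by rw [ha]; linarith
    have hbpos : 0 < b := by rw [hb]; linarith
    have h1 : (Lbar - a) ^ 2 ≤ c ^ 2 := by
      rw [ha, hc, hLbar]
      nlinarith [mul_nonneg hx0 (sub_nonneg.2 hxK)]
    have habge : Lbar ^ 2 - c ^ 2 ≤ a * b := by
      have hab2 : a * b = Lbar ^ 2 - (Lbar - a) ^ 2 := by rw [hb']; ring
      rw [hab2]; linarith
    have hM : 0 ≤ (m : ℝ) * (2 * Lbar - m) := by
      apply mul_nonneg hmR; linarith
    have hfval : f i * f (K - 1 - i) = ((a - m) * (b - m)) / (a * b) := by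
      have e1 : f i = ((n : ℝ) - i) / ((L : ℝ) - i) := rfl
      have e2 : f (K - 1 - i) = ((n : ℝ) - ((K - 1 - i : ℕ) : ℝ)) / ((L : ℝ) - ((K - 1 - i : ℕ) : ℝ)) := rfl
      rw [e1, e2, hy, hnR, div_mul_div_comm, ha, hb]
      ring_nf
    have habpos : 0 < a * b := mul_pos hapos hbpos
    constructor
    · rw [hfval, hrdef, div_le_div_iff₀ hden2 habpos]
      have hb' : b = 2 * Lbar - a := by linarith
      rw [hb']
      nlinarith [mul_nonneg hM (sub_nonneg.2 habge), sq_nonneg (a - Lbar)]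
    · rw [hfval, htdef, div_pow, div_le_div_iff₀ habpos (by positivity)]
      have hb' : b = 2 * Lbar - a := by linarith
      rw [hb']
      nlinarith [mul_nonneg hM (sq_nonneg (a - Lbar))]
  have hfnn : ∀ i ∈ Finset.range K, 0 ≤ f i := by
    intro i hi
    simp only [Finset.mem_range] at hi
    have h1 : (i : ℝ) ≤ (K : ℝ) - 1 := by
      have : i + 1 ≤ K := hi
      have := (Nat.cast_le (α := ℝ)).2 this
      push_cast at this; linarith
    apply div_nonneg
    · rw [hnR]; linarith
    · linarith
  have hR2 : R ^ 2 = ∏ i ∈ Finset.range K, (f i * f (K - 1 - i)) := by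
    rw [Finset.prod_mul_distrib, Finset.prod_range_reflect, hRprod, sq]
  have hrK : r ^ K ≤ R ^ 2 := by
    rw [hR2]
    calc r ^ K = ∏ _i ∈ Finset.range K, r := by
          rw [Finset.prod_const, Finset.card_range]
      _ ≤ _ := Finset.prod_le_prod (fun i _ => hr0) (fun i hi => (hpair i hi).1)
  have htK : R ^ 2 ≤ (t ^ K) ^ 2 := by
    rw [hR2, ← pow_mul, mul_comm K 2, pow_mul]
    calc ∏ i ∈ Finset.range K, (f i * f (K - 1 - i))
        ≤ ∏ _i ∈ Finset.range K, t ^ 2 :=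
          Finset.prod_le_prod (fun i hi => le_trans hr0 (hpair i hi).1)
            (fun i hi => (hpair i hi).2)
      _ = (t ^ 2) ^ K := by rw [Finset.prod_const, Finset.card_range]
  constructor
  · -- lower bound via rpow
    have h1 : r ^ ((K : ℝ) / 2) = (r ^ K) ^ ((1 : ℝ) / 2) := by
      rw [← Real.rpow_natCast r K, ← Real.rpow_mul hr0]
      congr 1
      ring
    rw [h1]
    have h2 : (r ^ K) ^ ((1 : ℝ) / 2) ≤ (R ^ 2) ^ ((1 : ℝ) / 2) :=
      Real.rpow_le_rpow (pow_nonneg hr0 K) hrK (by norm_num)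
    have h3 : (R ^ 2) ^ ((1 : ℝ) / 2) = R := by
      rw [← Real.sqrt_eq_rpow, Real.sqrt_sq hRnn]
    rw [h3] at h2
    exact h2
  · have htKnn : 0 ≤ t ^ K := pow_nonneg ht0 K
    nlinarith [htK, hRnn, htKnn]
end

section
/- Let L ≥ K ≥ 1 be integers and let d be an integer with 0 ≤ d < C(L,K). If the integer i with 0 ≤ i ≤ L-K satisfies C(L,K) - C(L-i,K) ≤ d < C(L,K) - C(L-(i+1),K), then i ≤ ⌊(L - (K-1)/2) · (1 - (1 - d/C(L,K))^{1/K})⌋. -/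
open Real Finset

/-!
Since `C(L-i,K) / C(L,K) = ∏_{t<K} (1 - i/(L-t))`, the hypothesis `C(L,K) - C(L-i,K) ≤ d` gives
`1 - d/C(L,K) ≤ ∏_{t<K} (1 - i/(L-t))`. By AM-GM the `K`-th root of this product is at most
`1 - (i/K) ∑_{t<K} 1/(L-t)`, and by HM-AM `∑_{t<K} 1/(L-t) ≥ K² / ∑_{t<K} (L-t) = K / (L - (K-1)/2)`.
Hence `(1 - d/C(L,K))^{1/K} ≤ 1 - i/(L - (K-1)/2)`.
-/

theorem sum_range_sub_natCast (L : ℝ) (K : ℕ) :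
    ∑ t ∈ range K, (L - t) = K * (L - (K - 1) / 2) := by
  induction K with
  | zero => simp
  | succ n ih => rw [sum_range_succ, ih]; push_cast; ring

theorem sub_natCast_pos_of_mem_range {L : ℝ} {K t : ℕ} (hL : (K : ℝ) - 1 < L)
    (ht : t ∈ range K) : 0 < L - t := by
  have : (t : ℝ) + 1 ≤ K := by exact_mod_cast mem_range.mp ht
  linarith

theorem div_le_sum_range_inv_sub {L : ℝ} {K : ℕ} (hL : (K : ℝ) - 1 < L) :
    K / (L - (K - 1) / 2) ≤ ∑ t ∈ range K, (L - t)⁻¹ := by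
  have h := sq_sum_div_le_sum_sq_div (range K) (fun _ ↦ (1 : ℝ))
    fun t ht ↦ sub_natCast_pos_of_mem_range hL ht
  simp only [sum_const, card_range, nsmul_eq_mul, mul_one, one_pow, one_div,
    sum_range_sub_natCast] at h
  rcases K.eq_zero_or_pos with rfl | hK
  · simp
  · rwa [sq, mul_div_mul_left _ _ (by positivity)] at h

theorem prod_range_one_sub_div_rpow_le {L x : ℝ} {K : ℕ} (hK : 0 < K) (hL : (K : ℝ) - 1 < L)
    (hx : 0 ≤ x) (hxL : x ≤ L - (K - 1)) :
    (∏ t ∈ range K, (1 - x / (L - t))) ^ ((1 : ℝ) / K) ≤ 1 - x / (L - (K - 1) / 2) := by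
  have hpos := fun t (ht : t ∈ range K) ↦ sub_natCast_pos_of_mem_range hL ht
  have hfac : ∀ t ∈ range K, 0 ≤ 1 - x / (L - t) := fun t ht ↦ by
    have : (t : ℝ) + 1 ≤ K := by exact_mod_cast mem_range.mp ht
    rw [sub_nonneg, div_le_one (hpos t ht)]
    linarith
  have amgm := geom_mean_le_arith_mean (range K) (fun _ ↦ 1) _ (fun _ _ ↦ zero_le_one)
    (by simpa using hK) hfac
  simp only [rpow_one, sum_const, card_range, nsmul_eq_mul, mul_one, one_mul] at amgm
  have hKR : (0 : ℝ) < K := by exact_mod_cast hK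
  calc (∏ t ∈ range K, (1 - x / (L - t))) ^ ((1 : ℝ) / K)
      ≤ (∑ t ∈ range K, (1 - x / (L - t))) / K := by rwa [one_div]
    _ = 1 - x / K * ∑ t ∈ range K, (L - t)⁻¹ := by
      simp only [sum_sub_distrib, sum_const, card_range, nsmul_eq_mul, mul_one, div_eq_mul_inv,
        ← mul_sum]
      field_simp
    _ ≤ 1 - x / K * (K / (L - (K - 1) / 2)) := by
      gcongr
      exact div_le_sum_range_inv_sub hL
    _ = 1 - x / (L - (K - 1) / 2) := by field_simp

theorem cast_descFactorial_eq_prod_range {m K : ℕ} (h : K ≤ m) :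
    (m.descFactorial K : ℝ) = ∏ t ∈ range K, ((m : ℝ) - t) := by
  rw [Nat.descFactorial_eq_prod_range, Nat.cast_prod]
  exact prod_congr rfl fun t ht ↦ Nat.cast_sub (by have := mem_range.mp ht; omega)

theorem cast_choose_sub_div_cast_choose {n i K : ℕ} (h : i + K ≤ n) :
    (Nat.choose (n - i) K : ℝ) / Nat.choose n K = ∏ t ∈ range K, (1 - (i : ℝ) / (n - t)) := by
  have hKn : (K : ℝ) - 1 < n := by
    have : (K : ℝ) ≤ n := by exact_mod_cast (by omega : K ≤ n)
    linarith
  calc (Nat.choose (n - i) K : ℝ) / Nat.choose n K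
      = ((n - i).descFactorial K : ℝ) / n.descFactorial K := by
        simp only [Nat.descFactorial_eq_factorial_mul_choose, Nat.cast_mul]
        rw [mul_div_mul_left _ _ (by positivity)]
    _ = ∏ t ∈ range K, (((n : ℝ) - i - t) / (n - t)) := by
        rw [cast_descFactorial_eq_prod_range (by omega), cast_descFactorial_eq_prod_range (by omega),
          prod_div_distrib, Nat.cast_sub (by omega)]
    _ = ∏ t ∈ range K, (1 - (i : ℝ) / (n - t)) := prod_congr rfl fun t ht ↦ by
        have := (sub_natCast_pos_of_mem_range hKn ht).ne'
        field_simp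
        ring

theorem stmt_5_general (L K : ℕ) (hK : 1 ≤ K)
    (d : ℕ) (hd : d < Nat.choose L K)
    (i : ℕ) (hi : i ≤ L - K)
    (h1 : Nat.choose L K - Nat.choose (L - i) K ≤ d) :
    (i : ℤ) ≤
      ⌊((L : ℝ) - ((K : ℝ) - 1) / 2) *
        (1 - (1 - (d : ℝ) / (Nat.choose L K : ℝ)) ^ ((1 : ℝ) / K))⌋ := by
  have hKL : K ≤ L := by
    by_contra! h
    simp [Nat.choose_eq_zero_of_lt h] at hd
  have hC : (0 : ℝ) < Nat.choose L K := by exact_mod_cast Nat.choose_pos hKL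
  have hKR : (1 : ℝ) ≤ K := by exact_mod_cast hK
  have hiK : (i : ℝ) + K ≤ L := by exact_mod_cast (by omega : i + K ≤ L)
  have hA : (0 : ℝ) < L - (K - 1) / 2 := by linarith
  have hbase : 1 - (d : ℝ) / Nat.choose L K ≤ (Nat.choose (L - i) K : ℝ) / Nat.choose L K := by
    rw [sub_le_iff_le_add, ← add_div, le_div_iff₀ hC, one_mul]
    exact_mod_cast (by omega : Nat.choose L K ≤ Nat.choose (L - i) K + d)
  have hbase0 : 0 ≤ 1 - (d : ℝ) / Nat.choose L K := by
    rw [sub_nonneg, div_le_one hC]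
    exact_mod_cast hd.le
  have hroot : (1 - (d : ℝ) / Nat.choose L K) ^ ((1 : ℝ) / K) ≤ 1 - i / (L - (K - 1) / 2) := by
    refine (rpow_le_rpow hbase0 hbase (by positivity)).trans ?_
    rw [cast_choose_sub_div_cast_choose (by omega)]
    exact prod_range_one_sub_div_rpow_le hK (by linarith) (Nat.cast_nonneg i) (by linarith)
  rw [Int.le_floor, Int.cast_natCast, ← div_le_iff₀' hA]
  linarith

theorem stmt_5 (L K : ℕ) (hK : 1 ≤ K) (hKL : K ≤ L)
    (d : ℕ) (hd : d < Nat.choose L K)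
    (i : ℕ) (hi : i ≤ L - K)
    (h1 : Nat.choose L K - Nat.choose (L - i) K ≤ d)
    (h2 : d < Nat.choose L K - Nat.choose (L - (i + 1)) K) :
    (i : ℤ) ≤
      ⌊((L : ℝ) - ((K : ℝ) - 1) / 2) *
        (1 - (1 - (d : ℝ) / (Nat.choose L K : ℝ)) ^ ((1 : ℝ) / K))⌋ :=
  stmt_5_general L K hK d hd i hi h1
end

section
/- Fix positive integers L and K with K ≤ L, and let the sequence L_1, L_2, ..., L_K be defined recursively by L_k = 2^{⌊log₂((L - Σ_{m=1}^{k-1} L_m)/(K-k+1))⌋}. Then Σ_{k=1}^K L_k ≤ L, each L_k is a power of 2, the sequence is nondecreasing (L_1 ≤ L_2 ≤ ... ≤ L_K), and L_K ≤ 2·L_1. -/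
/-!
Write `S k = Ls 0 + ⋯ + Ls (k - 1)`. While at least one unit is left per open slot,
`S k + (K - k) ≤ L`, the rounded-down quotient `Ls k` fits `K - k` times into `L - S k`; since
`Ls k ≥ 1` this feasibility passes to `k + 1`, and at `k = K` it is the sum bound. It also shows
that `Ls k` is at most the next quotient, whence `Ls k ≤ Ls (k + 1)`.

For the last claim let `a = Ls 0`, so `L < 2aK`. The bound `L - S k < 2a (K - k + 1)` survives
every step: if `Ls k ≤ a`, then already `L - S k < 2 Ls k (K - k) ≤ 2a (K - k)`; otherwise
`Ls k ≥ 2a`, being a larger power of two. At the end `Ls (K - 1) ≤ L - S (K - 1) < 4a`, so the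
power of two `Ls (K - 1)` is at most `2a`.
-/

open Finset

theorem mul_two_pow_log_div_le {R n : ℕ} (hnR : n ≤ R) : n * 2 ^ Nat.log 2 (R / n) ≤ R := by
  rcases n.eq_zero_or_pos with rfl | hn
  · simp
  calc n * 2 ^ Nat.log 2 (R / n) ≤ n * (R / n) :=
        Nat.mul_le_mul_left n (Nat.pow_log_le_self 2 (Nat.div_pos hnR hn).ne')
    _ ≤ R := Nat.mul_div_le R n

theorem lt_two_mul_two_pow_log_div_mul {R n : ℕ} (hn : 0 < n) :
    R < 2 * 2 ^ Nat.log 2 (R / n) * n := by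
  rw [← Nat.div_lt_iff_lt_mul hn, ← pow_succ']
  exact Nat.lt_pow_succ_log_self one_lt_two _

theorem two_pow_le_or_two_mul_two_pow_le (a b : ℕ) : 2 ^ b ≤ 2 ^ a ∨ 2 * 2 ^ a ≤ 2 ^ b := by
  rcases le_or_gt b a with hba | hab
  · exact .inl (Nat.pow_le_pow_right two_pos hba)
  · exact .inr (by rw [← pow_succ']; exact Nat.pow_le_pow_right two_pos hab)

theorem two_pow_le_two_mul_two_pow_of_lt_four_mul {a b : ℕ} (h : 2 ^ b < 4 * 2 ^ a) :
    2 ^ b ≤ 2 * 2 ^ a := by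
  rw [show 4 * 2 ^ a = 2 ^ (a + 2) by ring, Nat.pow_lt_pow_iff_right one_lt_two] at h
  rw [← pow_succ']
  exact Nat.pow_le_pow_right two_pos (by omega)

def IsGreedyPowTwoSplit (L K : ℕ) (Ls : ℕ → ℕ) : Prop :=
  ∀ k, k < K → Ls k = 2 ^ Nat.log 2 ((L - ∑ m ∈ range k, Ls m) / (K - k))

namespace IsGreedyPowTwoSplit

variable {L K k : ℕ} {Ls : ℕ → ℕ}

theorem pos (h : IsGreedyPowTwoSplit L K Ls) (hk : k < K) : 0 < Ls k := by
  rw [h k hk]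
  positivity

theorem first_eq (h : IsGreedyPowTwoSplit L K Ls) (hK : 0 < K) :
    Ls 0 = 2 ^ Nat.log 2 (L / K) := by
  simpa using h 0 hK

theorem sub_mul_add_sum_le (h : IsGreedyPowTwoSplit L K Ls) (hk : k < K)
    (hfeas : ∑ m ∈ range k, Ls m + (K - k) ≤ L) :
    (K - k) * Ls k + ∑ m ∈ range k, Ls m ≤ L := by
  have := mul_two_pow_log_div_le (R := L - ∑ m ∈ range k, Ls m) (n := K - k) (by omega)
  rw [h k hk]
  omega

theorem sum_add_sub_le (h : IsGreedyPowTwoSplit L K Ls) (hKL : K ≤ L) :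
    ∀ k ≤ K, ∑ m ∈ range k, Ls m + (K - k) ≤ L := by
  intro k
  induction k with
  | zero => simpa using hKL
  | succ k ih =>
    intro hk
    have hfit := h.sub_mul_add_sum_le hk (ih (by omega))
    have hsplit : (K - k) * Ls k = (K - (k + 1)) * Ls k + Ls k := by
      rw [show K - k = K - (k + 1) + 1 by omega, add_one_mul]
    have hslots : K - (k + 1) ≤ (K - (k + 1)) * Ls k := Nat.le_mul_of_pos_right _ (h.pos hk)
    rw [sum_range_succ]
    omega

theorem sum_le (h : IsGreedyPowTwoSplit L K Ls) (hKL : K ≤ L) : ∑ k ∈ range K, Ls k ≤ L := by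
  simpa using h.sum_add_sub_le hKL K le_rfl

theorem le_succ (h : IsGreedyPowTwoSplit L K Ls) (hKL : K ≤ L) (hk : k + 1 < K) :
    Ls k ≤ Ls (k + 1) := by
  have hfit := h.sub_mul_add_sum_le (by omega) (h.sum_add_sub_le hKL k (by omega))
  have hle : Ls k ≤ (L - ∑ m ∈ range (k + 1), Ls m) / (K - (k + 1)) := by
    rw [Nat.le_div_iff_mul_le (by omega), sum_range_succ]
    have hsplit : (K - k) * Ls k = Ls k * (K - (k + 1)) + Ls k := by
      rw [show K - k = K - (k + 1) + 1 by omega]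
      ring
    omega
  rw [h (k + 1) hk]
  rw [h k (by omega)] at hle ⊢
  exact Nat.pow_le_pow_right two_pos (Nat.le_log_of_pow_le one_lt_two hle)

theorem le_of_le (h : IsGreedyPowTwoSplit L K Ls) (hKL : K ≤ L) {j : ℕ} (hjk : j ≤ k)
    (hk : k < K) : Ls j ≤ Ls k := by
  induction k, hjk using Nat.le_induction with
  | base => exact le_rfl
  | succ k _ ih => exact (ih (by omega)).trans (h.le_succ hKL hk)

theorem lt_sum_add (h : IsGreedyPowTwoSplit L K Ls) :
    ∀ k < K, L < ∑ m ∈ range k, Ls m + (K - k + 1) * (2 * Ls 0) := by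
  intro k
  induction k with
  | zero =>
    intro hK
    have hL := lt_two_mul_two_pow_log_div_mul (R := L) hK
    rw [← h.first_eq hK] at hL
    simp only [range_zero, sum_empty, Nat.sub_zero]
    nlinarith
  | succ k ih =>
    intro hk
    have hL := ih (by omega)
    have hslots : K - k = K - (k + 1) + 1 := by omega
    rw [sum_range_succ]
    rw [hslots] at hL
    have hdich := two_pow_le_or_two_mul_two_pow_le (Nat.log 2 (L / K)) (Nat.log 2
      ((L - ∑ m ∈ range k, Ls m) / (K - k)))
    rw [← h k (by omega), ← h.first_eq (by omega)] at hdich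
    rcases hdich with hsmall | hbig
    · have hq := lt_two_mul_two_pow_log_div_mul
        (R := L - ∑ m ∈ range k, Ls m) (n := K - k) (by omega)
      rw [← h k (by omega), hslots] at hq
      nlinarith [lt_add_of_tsub_lt_left hq]
    · nlinarith

theorem last_le_two_mul_first (h : IsGreedyPowTwoSplit L K Ls) (hK : 1 ≤ K) (hKL : K ≤ L) :
    Ls (K - 1) ≤ 2 * Ls 0 := by
  have hlast : K - (K - 1) = 1 := by omega
  have hL := h.lt_sum_add (K - 1) (by omega)
  have hfit := h.sub_mul_add_sum_le (k := K - 1) (by omega) (h.sum_add_sub_le hKL _ (by omega))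
  rw [hlast] at hL hfit
  have hlt : Ls (K - 1) < 4 * Ls 0 := by omega
  rw [h (K - 1) (by omega), h 0 (by omega)] at hlt ⊢
  exact two_pow_le_two_mul_two_pow_of_lt_four_mul hlt

end IsGreedyPowTwoSplit

theorem stmt_6 (L K : ℕ) (hK : 1 ≤ K) (hKL : K ≤ L)
    (Ls : ℕ → ℕ)
    (hrec : ∀ k, k < K →
      Ls k = 2 ^ (Nat.log 2 ((L - ∑ m ∈ Finset.range k, Ls m) / (K - k)))) :
    (∑ k ∈ Finset.range K, Ls k ≤ L) ∧
    (∀ k, k < K → ∃ n : ℕ, Ls k = 2 ^ n) ∧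
    (∀ j k, j ≤ k → k < K → Ls j ≤ Ls k) ∧
    Ls (K - 1) ≤ 2 * Ls 0 := by
  have h : IsGreedyPowTwoSplit L K Ls := hrec
  exact ⟨h.sum_le hKL, fun k hk => ⟨_, hrec k hk⟩, fun _ _ hjk hk => h.le_of_le hKL hjk hk,
    h.last_le_two_mul_first hK hKL⟩
end

section
/- Let A be an N × L complex matrix with unit-norm columns and mutual coherence μ > 0, let M be a PSK constellation of unit-modulus symbols with coherence γ = max_{i≠m} Re(conj(b_i) b_m), and let y = Σ_{k=1}^K β_k a_{α_k} with distinct column indices α_k and β_k ∈ M. If K < min{(1+μ)/(2μ), (1+2μ-γ)/(2μ)}, then for every active index ℓ, the metric Re⟨y, β_ℓ a_{α_ℓ}⟩ strictly exceeds both Re⟨y, b a_{α_ℓ}⟩ for every b ∈ M with b ≠ β_ℓ, and Re⟨y, b a_j⟩ for every inactive column index j and every b ∈ M. -/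
open scoped ComplexInnerProductSpace
open Finset

/-!
Write `y = β_ℓ a_{α_ℓ} + r`, where `r` collects the other `K - 1` active atoms. Testing `y` against
a unit multiple `c a_{α_ℓ}` of an active atom gives `Re (conj c β_ℓ)` up to an error of at most
`(K - 1) μ`, by coherence; this is `1` for the correct symbol and at most `γ` for a wrong one.
Testing against an inactive atom gives at most `K μ`. The bound on `K` is exactly what makes
`1 - (K - 1) μ` beat both `γ + (K - 1) μ` and `K μ`.
-/

section Coherence

variable {E ι κ : Type*} [NormedAddCommGroup E] [InnerProductSpace ℂ E]

lemma inner_smul_smul_of_norm_eq_one {v : E} (hv : ‖v‖ = 1) (c b : ℂ) :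
    ⟪c • v, b • v⟫ = starRingEnd ℂ c * b := by
  rw [inner_smul_left, inner_smul_right, inner_self_eq_norm_sq_to_K, hv]
  simp

lemma norm_inner_smul_sum_le {a : ι → E} {μ : ℝ}
    (hcoh : ∀ p q, p ≠ q → ‖⟪a p, a q⟫‖ ≤ μ) {c : ℂ} (hc : ‖c‖ = 1) {i : ι}
    (s : Finset κ) {α : κ → ι} (hi : ∀ k ∈ s, α k ≠ i) {β : κ → ℂ}
    (hβ : ∀ k ∈ s, ‖β k‖ = 1) :
    ‖⟪c • a i, ∑ k ∈ s, β k • a (α k)⟫‖ ≤ #s * μ := by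
  rw [inner_sum]
  calc ‖∑ k ∈ s, ⟪c • a i, β k • a (α k)⟫‖
      ≤ ∑ k ∈ s, ‖⟪c • a i, β k • a (α k)⟫‖ := norm_sum_le _ _
    _ ≤ ∑ _k ∈ s, μ := sum_le_sum fun k hk => by
        rw [inner_smul_left, inner_smul_right, norm_mul, norm_mul, RCLike.norm_conj, hc,
          hβ k hk, one_mul, one_mul]
        exact hcoh _ _ (hi k hk).symm
    _ = #s * μ := by rw [sum_const, nsmul_eq_mul]

lemma abs_re_inner_active_sub_le [Fintype κ] [DecidableEq κ] {a : ι → E}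
    (hnorm : ∀ i, ‖a i‖ = 1) {μ : ℝ} (hcoh : ∀ p q, p ≠ q → ‖⟪a p, a q⟫‖ ≤ μ)
    {α : κ → ι} (hα : Function.Injective α) {β : κ → ℂ} (hβ : ∀ k, ‖β k‖ = 1)
    {c : ℂ} (hc : ‖c‖ = 1) (ℓ : κ) :
    |(⟪c • a (α ℓ), ∑ k, β k • a (α k)⟫).re - (starRingEnd ℂ c * β ℓ).re|
      ≤ (Fintype.card κ - 1) * μ := by
  rw [← add_sum_erase _ _ (mem_univ ℓ), inner_add_right,
    inner_smul_smul_of_norm_eq_one (hnorm _), Complex.add_re, add_sub_cancel_left]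
  refine (Complex.abs_re_le_norm _).trans
    ((norm_inner_smul_sum_le hcoh hc _ (fun k hk => hα.ne (ne_of_mem_erase hk))
      fun k _ => hβ k).trans_eq ?_)
  rw [card_erase_of_mem (mem_univ ℓ), card_univ,
    Nat.cast_pred (Fintype.card_pos_iff.mpr ⟨ℓ⟩)]

end Coherence

theorem stmt_13_general (N L K : ℕ)
    (a : Fin L → EuclideanSpace ℂ (Fin N))
    (hnorm : ∀ i, ‖a i‖ = 1)
    (μ : ℝ) (hμpos : 0 < μ)
    (hμ : IsGreatest {x : ℝ | ∃ p q : Fin L, p ≠ q ∧ x = ‖⟪a p, a q⟫‖} μ)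
    (M : Finset ℂ) (hM : ∀ b ∈ M, ‖b‖ = 1)
    (γ : ℝ)
    (hγ : IsGreatest
      {x : ℝ | ∃ b ∈ M, ∃ b' ∈ M, b ≠ b' ∧ x = ((starRingEnd ℂ) b * b').re} γ)
    (α : Fin K → Fin L) (hα : Function.Injective α)
    (β : Fin K → ℂ) (hβ : ∀ k, β k ∈ M)
    (y : EuclideanSpace ℂ (Fin N))
    (hy : y = ∑ k : Fin K, β k • a (α k))
    (hKbound : (K : ℝ) < min ((1 + μ) / (2 * μ)) ((1 + 2 * μ - γ) / (2 * μ))) :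
    ∀ ℓ : Fin K,
      (∀ b ∈ M, b ≠ β ℓ →
        (⟪b • a (α ℓ), y⟫).re < (⟪β ℓ • a (α ℓ), y⟫).re) ∧
      (∀ j : Fin L, (∀ k : Fin K, α k ≠ j) → ∀ b ∈ M,
        (⟪b • a j, y⟫).re < (⟪β ℓ • a (α ℓ), y⟫).re) := by
  intro ℓ
  subst hy
  have hcoh : ∀ p q, p ≠ q → ‖⟪a p, a q⟫‖ ≤ μ := fun p q hpq => hμ.2 ⟨p, q, hpq, rfl⟩
  have hβ1 : ∀ k, ‖β k‖ = 1 := fun k => hM _ (hβ k)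
  rw [lt_min_iff, lt_div_iff₀ (by positivity), lt_div_iff₀ (by positivity)] at hKbound
  have hmatch := abs_re_inner_active_sub_le hnorm hcoh hα hβ1 (hβ1 ℓ) ℓ
  rw [Complex.conj_mul', hβ1, Fintype.card_fin] at hmatch
  simp only [Complex.ofReal_one, one_pow, Complex.one_re] at hmatch
  refine ⟨fun b hb hbne => ?_, fun j hj b hb => ?_⟩
  · have hwrong := abs_re_inner_active_sub_le hnorm hcoh hα hβ1 (hM b hb) ℓ
    have hγb : (starRingEnd ℂ b * β ℓ).re ≤ γ := hγ.2 ⟨b, hb, β ℓ, hβ ℓ, hbne, rfl⟩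
    rw [Fintype.card_fin] at hwrong
    linarith [(abs_le.mp hmatch).1, (abs_le.mp hwrong).2]
  · have hinactive := (Complex.re_le_norm _).trans
      (norm_inner_smul_sum_le hcoh (hM b hb) univ (fun k _ => hj k) fun k _ => hβ1 k)
    rw [card_univ, Fintype.card_fin] at hinactive
    linarith [(abs_le.mp hmatch).1]

theorem stmt_13 (N L K : ℕ) (hK : 1 ≤ K)
    (a : Fin L → EuclideanSpace ℂ (Fin N))
    (hnorm : ∀ i, ‖a i‖ = 1)
    (μ : ℝ) (hμpos : 0 < μ)
    (hμ : IsGreatest {x : ℝ | ∃ p q : Fin L, p ≠ q ∧ x = ‖⟪a p, a q⟫‖} μ)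
    (M : Finset ℂ) (hM : ∀ b ∈ M, ‖b‖ = 1)
    (γ : ℝ)
    (hγ : IsGreatest
      {x : ℝ | ∃ b ∈ M, ∃ b' ∈ M, b ≠ b' ∧ x = ((starRingEnd ℂ) b * b').re} γ)
    (α : Fin K → Fin L) (hα : Function.Injective α)
    (β : Fin K → ℂ) (hβ : ∀ k, β k ∈ M)
    (y : EuclideanSpace ℂ (Fin N))
    (hy : y = ∑ k : Fin K, β k • a (α k))
    (hKbound : (K : ℝ) < min ((1 + μ) / (2 * μ)) ((1 + 2 * μ - γ) / (2 * μ))) :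
    ∀ ℓ : Fin K,
      (∀ b ∈ M, b ≠ β ℓ →
        (⟪b • a (α ℓ), y⟫).re < (⟪β ℓ • a (α ℓ), y⟫).re) ∧
      (∀ j : Fin L, (∀ k : Fin K, α k ≠ j) → ∀ b ∈ M,
        (⟪b • a j, y⟫).re < (⟪β ℓ • a (α ℓ), y⟫).re) :=
  stmt_13_general N L K a hnorm μ hμpos hμ M hM γ hγ α hα β hβ y hy hKbound
end

section
/- Under the hypotheses that A has unit-norm columns with mutual coherence μ > 0, M is a unit-modulus PSK constellation with coherence γ, and K < min{(1+μ)/(2μ), (1+2μ-γ)/(2μ)}, the MAD greedy decoder (which at each step selects the (column, symbol) pair maximizing Re⟨r, b a_i⟩ over remaining columns and subtracts the detected term from the residual r) recovers the exact support {α_1,...,α_K} and the exact symbols β_1,...,β_K from the noiseless observation y = Σ_k β_k a_{α_k} in K iterations. -/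
/-!
While the residual is a sum `∑_{k ∈ S} β_k a_{α_k}` of `m = #S ≤ K` undetected atoms, the
correlation `Re⟨b a_j, r⟩` of a correct pair `(α_k, β_k)` is at least `1 - (m - 1) μ`, that of a
column off the support is at most `m μ`, and that of a support column with a wrong symbol is at
most `γ + (m - 1) μ`. The bound on `K` makes the correct pairs win strictly, so every greedy step
peels off one true atom and the new residual has the same form with `m - 1` atoms.
-/

open scoped ComplexInnerProductSpace ComplexConjugate
open Finset Function

section Correlation

variable {E ι κ : Type*} [NormedAddCommGroup E] [InnerProductSpace ℂ E]
  {a : ι → E} {μ : ℝ} {α : κ → ι} {β : κ → ℂ} {S : Finset κ} {b : ℂ}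

theorem norm_inner_smul_sum_le_s14 (hμ : ∀ p q, p ≠ q → ‖⟪a p, a q⟫‖ ≤ μ)
    (hβ : ∀ k ∈ S, ‖β k‖ = 1) (hb : ‖b‖ = 1) {j : ι} (hj : ∀ k ∈ S, α k ≠ j) :
    ‖⟪b • a j, ∑ k ∈ S, β k • a (α k)⟫‖ ≤ #S * μ := by
  rw [inner_sum, ← nsmul_eq_mul]
  refine (norm_sum_le _ _).trans (sum_le_card_nsmul _ _ _ fun k hk => ?_)
  rw [inner_smul_left, inner_smul_right, norm_mul, norm_mul, Complex.norm_conj, hb, hβ k hk,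
    one_mul, one_mul]
  exact hμ j (α k) (hj k hk).symm

theorem abs_re_inner_smul_sum_sub_le (hnorm : ∀ i, ‖a i‖ = 1)
    (hμ : ∀ p q, p ≠ q → ‖⟪a p, a q⟫‖ ≤ μ) (hα : Injective α) (hβ : ∀ k ∈ S, ‖β k‖ = 1)
    (hb : ‖b‖ = 1) [DecidableEq κ] {k : κ} (hk : k ∈ S) :
    |(⟪b • a (α k), ∑ k ∈ S, β k • a (α k)⟫).re - (conj b * β k).re| ≤ (#S - 1) * μ := by
  have hdiag : ⟪b • a (α k), β k • a (α k)⟫ = conj b * β k := by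
    rw [inner_smul_left, inner_smul_right, inner_self_eq_norm_sq_to_K, hnorm]
    simp
  rw [← add_sum_erase S _ hk, inner_add_right, hdiag, Complex.add_re, add_sub_cancel_left]
  refine (Complex.abs_re_le_norm _).trans ?_
  have hinterference := norm_inner_smul_sum_le_s14 (S := S.erase k) (j := α k) hμ
    (fun k' hk' => hβ k' (mem_of_mem_erase hk')) hb fun k' hk' => hα.ne (ne_of_mem_erase hk')
  rwa [card_erase_of_mem hk, Nat.cast_pred (card_pos.2 ⟨k, hk⟩)] at hinterference

theorem greedy_step_mem_support [DecidableEq κ] {M : Finset ℂ} {γ : ℝ} (hnorm : ∀ i, ‖a i‖ = 1)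
    (hμ : ∀ p q, p ≠ q → ‖⟪a p, a q⟫‖ ≤ μ) (hM : ∀ b ∈ M, ‖b‖ = 1)
    (hγ : ∀ b ∈ M, ∀ b' ∈ M, b ≠ b' → (conj b * b').re ≤ γ) (hα : Injective α)
    (hβ : ∀ k ∈ S, β k ∈ M) (hS : S.Nonempty) (hμS : 2 * #S * μ < 1 + μ)
    (hγS : 2 * #S * μ < 1 + 2 * μ - γ) {i : ι} {s : ℂ} (hs : s ∈ M)
    (hmax : ∀ k ∈ S, ∀ b ∈ M, (⟪b • a (α k), ∑ k ∈ S, β k • a (α k)⟫).re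
      ≤ (⟪s • a i, ∑ k ∈ S, β k • a (α k)⟫).re) :
    ∃ k ∈ S, α k = i ∧ β k = s := by
  have hβ1 : ∀ k ∈ S, ‖β k‖ = 1 := fun k hk => hM _ (hβ k hk)
  have hlower : ∀ k ∈ S, 1 - (#S - 1) * μ ≤ (⟪s • a i, ∑ k ∈ S, β k • a (α k)⟫).re := by
    intro k hk
    have hcorrect := abs_le.1 (abs_re_inner_smul_sum_sub_le hnorm hμ hα hβ1 (hβ1 k hk) hk)
    have hone : (conj (β k) * β k).re = 1 := by simp [Complex.conj_mul', hβ1 k hk]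
    linarith [hmax k hk (β k) (hβ k hk)]
  obtain ⟨k₀, hk₀⟩ := hS
  obtain ⟨k, hk, rfl⟩ : ∃ k ∈ S, α k = i := by
    by_contra! hoff
    have hcorr := (Complex.re_le_norm _).trans
      (norm_inner_smul_sum_le_s14 hμ hβ1 (hM s hs) hoff)
    linarith [hlower k₀ hk₀]
  refine ⟨k, hk, rfl, ?_⟩
  by_contra hne
  have hwrong := abs_le.1 (abs_re_inner_smul_sum_sub_le hnorm hμ hα hβ1 (hM s hs) hk)
  linarith [hlower k hk, hγ s hs (β k) (hβ k hk) (Ne.symm hne)]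

end Correlation

section Run

variable {E ι : Type*} [NormedAddCommGroup E] [InnerProductSpace ℂ E]

/-- `r t` is the residual before step `t`, at which the pair `(idx t, sym t)` is detected. -/
structure IsMADRun (a : ι → E) (M : Finset ℂ) (y : E) (K : ℕ) (idx : ℕ → ι) (sym : ℕ → ℂ)
    (r : ℕ → E) : Prop where
  residual_zero : r 0 = y
  residual_succ : ∀ t < K, r (t + 1) = r t - sym t • a (idx t)
  sym_mem : ∀ t < K, sym t ∈ M
  greedy : ∀ t < K, ∀ j, (∀ u < t, j ≠ idx u) → ∀ b ∈ M,
    (⟪b • a j, r t⟫).re - ‖b‖ ^ 2 / 2 ≤ (⟪sym t • a (idx t), r t⟫).re - ‖sym t‖ ^ 2 / 2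

variable {κ : Type*} [Fintype κ] [DecidableEq ι]

def undetected (α : κ → ι) (idx : ℕ → ι) (t : ℕ) : Finset κ :=
  {k | ∀ u < t, α k ≠ idx u}

variable {α : κ → ι} {idx : ℕ → ι}

theorem mem_undetected {k : κ} {t : ℕ} : k ∈ undetected α idx t ↔ ∀ u < t, α k ≠ idx u := by
  simp [undetected]

theorem undetected_zero : undetected α idx 0 = univ := by
  ext; simp [mem_undetected]

theorem undetected_succ [DecidableEq κ] (hα : Injective α) {k : κ} {t : ℕ} (hk : α k = idx t) :
    undetected α idx (t + 1) = (undetected α idx t).erase k := by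
  ext k'
  simp only [mem_undetected, mem_erase, Nat.lt_succ_iff_lt_or_eq, or_imp, forall_and,
    forall_eq, ← hk, hα.ne_iff]
  tauto

theorem exists_perm_of_forall_mem_undetected {X : Type*} {K : ℕ} {α : Fin K → ι} {β : Fin K → X}
    {sym : ℕ → X} (h : ∀ t < K, ∃ k ∈ undetected α idx t, α k = idx t ∧ β k = sym t) :
    ∃ σ : Equiv.Perm (Fin K), ∀ k : Fin K, idx k = α (σ k) ∧ sym k = β (σ k) := by
  choose f hf using fun t : Fin K => h t t.isLt
  have hf_inj : Injective f := by
    intro u v huv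
    by_contra hne
    wlog hlt : (u : ℕ) < v generalizing u v
    · exact this huv.symm (Ne.symm hne) (lt_of_le_of_ne (not_lt.1 hlt) (Fin.val_ne_of_ne hne).symm)
    exact mem_undetected.1 (hf v).1 u hlt (huv ▸ (hf u).2.1)
  exact ⟨Equiv.ofBijective f hf_inj.bijective_of_finite,
    fun k => ⟨(hf k).2.1.symm, (hf k).2.2.symm⟩⟩

theorem IsMADRun.exists_mem_undetected {a : ι → E} {μ γ : ℝ} {M : Finset ℂ} {K : ℕ}
    {α : Fin K → ι} {β : Fin K → ℂ} {sym : ℕ → ℂ} {r : ℕ → E}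
    (hrun : IsMADRun a M (∑ k, β k • a (α k)) K idx sym r) (hnorm : ∀ i, ‖a i‖ = 1)
    (hμ : ∀ p q, p ≠ q → ‖⟪a p, a q⟫‖ ≤ μ) (hM : ∀ b ∈ M, ‖b‖ = 1)
    (hγ : ∀ b ∈ M, ∀ b' ∈ M, b ≠ b' → (conj b * b').re ≤ γ) (hα : Injective α)
    (hβ : ∀ k, β k ∈ M) (hμ0 : 0 ≤ μ) (hμK : 2 * K * μ < 1 + μ)
    (hγK : 2 * K * μ < 1 + 2 * μ - γ) :
    ∀ t < K, ∃ k ∈ undetected α idx t, α k = idx t ∧ β k = sym t := by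
  have hstep : ∀ t < K, r t = ∑ k ∈ undetected α idx t, β k • a (α k) →
      #(undetected α idx t) + t = K → ∃ k ∈ undetected α idx t, α k = idx t ∧ β k = sym t := by
    intro t ht hres hcard
    have hμS : 2 * #(undetected α idx t) * μ ≤ 2 * K * μ := by
      have := card_le_univ (undetected α idx t)
      rw [Fintype.card_fin] at this
      gcongr
    refine greedy_step_mem_support hnorm hμ hM hγ hα (fun k _ => hβ k)
      (card_pos.1 (by omega)) (by linarith) (by linarith) (hrun.sym_mem t ht) ?_
    intro k hk b hb
    have hgreedy := hrun.greedy t ht (α k) (mem_undetected.1 hk) b hb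
    rw [hM b hb, hM _ (hrun.sym_mem t ht), hres] at hgreedy
    linarith
  have hresidual : ∀ t ≤ K, r t = ∑ k ∈ undetected α idx t, β k • a (α k) ∧
      #(undetected α idx t) + t = K := by
    intro t
    induction t with
    | zero => simp [undetected_zero, hrun.residual_zero]
    | succ t ih =>
      intro ht
      obtain ⟨hres, hcard⟩ := ih (by omega)
      obtain ⟨k, hk, hidx, hsym⟩ := hstep t ht hres hcard
      rw [undetected_succ hα hidx, hrun.residual_succ t ht, hres, ← hidx, ← hsym,
        sum_erase_eq_sub hk, card_erase_of_mem hk]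
      exact ⟨rfl, by omega⟩
  exact fun t ht => hstep t ht (hresidual t ht.le).1 (hresidual t ht.le).2

end Run

theorem stmt_14_general (N L K : ℕ)
    (a : Fin L → EuclideanSpace ℂ (Fin N))
    (hnorm : ∀ i, ‖a i‖ = 1)
    (μ : ℝ) (hμpos : 0 < μ)
    (hμ : IsGreatest {x : ℝ | ∃ p q : Fin L, p ≠ q ∧ x = ‖⟪a p, a q⟫‖} μ)
    (M : Finset ℂ) (hM : ∀ b ∈ M, ‖b‖ = 1)
    (γ : ℝ)
    (hγ : IsGreatest
      {x : ℝ | ∃ b ∈ M, ∃ b' ∈ M, b ≠ b' ∧ x = ((starRingEnd ℂ) b * b').re} γ)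
    (α : Fin K → Fin L) (hα : Function.Injective α)
    (β : Fin K → ℂ) (hβ : ∀ k, β k ∈ M)
    (y : EuclideanSpace ℂ (Fin N))
    (hy : y = ∑ k : Fin K, β k • a (α k))
    (hKbound : (K : ℝ) < min ((1 + μ) / (2 * μ)) ((1 + 2 * μ - γ) / (2 * μ)))
    -- a run of the MAD greedy decoder on the noiseless observation `y`:
    (idx : ℕ → Fin L) (sym : ℕ → ℂ) (r : ℕ → EuclideanSpace ℂ (Fin N))
    (hr0 : r 0 = y)
    (hrec : ∀ t < K, r (t + 1) = r t - sym t • a (idx t))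
    (hsym : ∀ t < K, sym t ∈ M)
    (hgreedy : ∀ t < K, ∀ j : Fin L, (∀ u < t, j ≠ idx u) → ∀ b ∈ M,
      (⟪b • a j, r t⟫).re - ‖b‖ ^ 2 / 2
        ≤ (⟪sym t • a (idx t), r t⟫).re - ‖sym t‖ ^ 2 / 2) :
    ∃ σ : Equiv.Perm (Fin K),
      ∀ k : Fin K, idx (k : ℕ) = α (σ k) ∧ sym (k : ℕ) = β (σ k) := by
  have hcoh : ∀ p q, p ≠ q → ‖⟪a p, a q⟫‖ ≤ μ := fun p q hpq => hμ.2 ⟨p, q, hpq, rfl⟩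
  have hγ' : ∀ b ∈ M, ∀ b' ∈ M, b ≠ b' → (conj b * b').re ≤ γ :=
    fun b hb b' hb' hne => hγ.2 ⟨b, hb, b', hb', hne, rfl⟩
  rw [lt_min_iff, lt_div_iff₀ (by positivity), lt_div_iff₀ (by positivity)] at hKbound
  have hrun : IsMADRun a M (∑ k, β k • a (α k)) K idx sym r :=
    ⟨hr0.trans hy, hrec, hsym, hgreedy⟩
  exact exists_perm_of_forall_mem_undetected <| hrun.exists_mem_undetected hnorm hcoh hM hγ' hα hβ
    hμpos.le (by linarith) (by linarith)

theorem stmt_14 (N L K : ℕ) (hK : 1 ≤ K)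
    (a : Fin L → EuclideanSpace ℂ (Fin N))
    (hnorm : ∀ i, ‖a i‖ = 1)
    (μ : ℝ) (hμpos : 0 < μ)
    (hμ : IsGreatest {x : ℝ | ∃ p q : Fin L, p ≠ q ∧ x = ‖⟪a p, a q⟫‖} μ)
    (M : Finset ℂ) (hM : ∀ b ∈ M, ‖b‖ = 1)
    (γ : ℝ)
    (hγ : IsGreatest
      {x : ℝ | ∃ b ∈ M, ∃ b' ∈ M, b ≠ b' ∧ x = ((starRingEnd ℂ) b * b').re} γ)
    (α : Fin K → Fin L) (hα : Function.Injective α)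
    (β : Fin K → ℂ) (hβ : ∀ k, β k ∈ M)
    (y : EuclideanSpace ℂ (Fin N))
    (hy : y = ∑ k : Fin K, β k • a (α k))
    (hKbound : (K : ℝ) < min ((1 + μ) / (2 * μ)) ((1 + 2 * μ - γ) / (2 * μ)))
    -- a run of the MAD greedy decoder on the noiseless observation `y`:
    (idx : ℕ → Fin L) (sym : ℕ → ℂ) (r : ℕ → EuclideanSpace ℂ (Fin N))
    (hr0 : r 0 = y)
    (hrec : ∀ t < K, r (t + 1) = r t - sym t • a (idx t))
    (hsym : ∀ t < K, sym t ∈ M)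
    (hdistinct : ∀ t < K, ∀ u < t, idx t ≠ idx u)
    (hgreedy : ∀ t < K, ∀ j : Fin L, (∀ u < t, j ≠ idx u) → ∀ b ∈ M,
      (⟪b • a j, r t⟫).re - ‖b‖ ^ 2 / 2
        ≤ (⟪sym t • a (idx t), r t⟫).re - ‖sym t‖ ^ 2 / 2) :
    ∃ σ : Equiv.Perm (Fin K),
      ∀ k : Fin K, idx (k : ℕ) = α (σ k) ∧ sym (k : ℕ) = β (σ k) :=
  stmt_14_general N L K a hnorm μ hμpos hμ M hM γ hγ α hα β hβ y hy hKbound idx sym r hr0 hrec hsym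
    hgreedy
end
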